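/- Let Y be an fpc and f a variable not occurring in Y, and let A_Y = Y(λz.fzz). Call a reduct M of A_Y balanced if s ≡ t (syntactic equality up to renaming of bound variables) for every subterm of M of the form f s t in which the displayed occurrence of f is a free occurrence of the variable f. Then for every M with A_Y ↠β M there exists a balanced N with M ↠β N. -/

import Mathlib

/-- Untyped λ-terms in de Bruijn notation (the variables are `ℕ`). -/
inductive Lam : Type
  | var : ℕ → Lam
  | app : Lam → Lam → Lam
  | abs : Lam → Lam
  deriving DecidableEq

namespace Lam

/-- Shift the free de Bruijn indices `≥ d` up by one. -/
def lift (d : ℕ) : Lam → Lam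
  | var n => if n < d then var n else var (n + 1)
  | app s t => app (lift d s) (lift d t)
  | abs t => abs (lift (d + 1) t)

/-- Capture-avoiding substitution `t[k := u]`. -/
def subst : Lam → ℕ → Lam → Lam
  | var n, k, u => if n < k then var n else if n = k then u else var (n - 1)
  | app s t, k, u => app (subst s k u) (subst t k u)
  | abs t, k, u => abs (subst t (k + 1) (lift 0 u))

/-- One-step β-reduction `→β`: the compatible closure of the β-rule. -/
inductive Beta : Lam → Lam → Prop
  | beta (t u : Lam) : Beta (Lam.app (Lam.abs t) u) (subst t 0 u)
  | appL {s s' : Lam} (t : Lam) : Beta s s' → Beta (Lam.app s t) (Lam.app s' t)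
  | appR (s : Lam) {t t' : Lam} : Beta t t' → Beta (Lam.app s t) (Lam.app s t')
  | abs {t t' : Lam} : Beta t t' → Beta (Lam.abs t) (Lam.abs t')

/-- `↠β`: the reflexive–transitive closure of `→β`. -/
def BetaStar : Lam → Lam → Prop := Relation.ReflTransGen Beta

/-- `→β^k`: the `k`-fold composition of `→β`. -/
def BetaN : ℕ → Lam → Lam → Prop
  | 0, s, t => s = t
  | k + 1, s, t => ∃ u, Beta s u ∧ BetaN k u t

/-- `=β`, β-convertibility: the equivalence closure of `→β`. -/
inductive Conv : Lam → Lam → Prop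
  | rel {s t : Lam} : Beta s t → Conv s t
  | refl (s : Lam) : Conv s s
  | symm {s t : Lam} : Conv s t → Conv t s
  | trans {s t u : Lam} : Conv s t → Conv t u → Conv s u

/-- The free variables of a term (as de Bruijn indices). -/
def FV : Lam → Finset ℕ
  | var n => {n}
  | app s t => FV s ∪ FV t
  | abs t => ((FV t).erase 0).image (· - 1)

/-- `Y` is a fixed point combinator (fpc): `Y x =β x (Y x)` for a variable `x` not free in `Y`. -/
def IsFPC (Y : Lam) : Prop :=
  ∀ x : ℕ, x ∉ FV Y → Conv (app Y (var x)) (app (var x) (app Y (var x)))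

/-- `I = λx.x` -/
def combI : Lam := abs (var 0)

/-- `S = λxyz.xz(yz)` -/
def combS : Lam := abs (abs (abs (app (app (var 2) (var 0)) (app (var 1) (var 0)))))

/-- `B = λxyz.x(yz)` -/
def combB : Lam := abs (abs (abs (app (var 2) (app (var 1) (var 0)))))

/-- `δ = λab.b(ab)` -/
def delta : Lam := abs (abs (app (var 0) (app (var 1) (var 0))))

/-- `η = λxf.f(xxf)` -/
def etaC : Lam := abs (abs (app (var 0) (app (app (var 1) (var 1)) (var 0))))

/-- Curry's fpc `Y₀ = λf.(λx.f(xx))(λx.f(xx))` -/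
def curryY : Lam :=
  abs (app (abs (app (var 1) (app (var 0) (var 0))))
    (abs (app (var 1) (app (var 0) (var 0)))))

/-- `A B ⋯ B`: `A` applied to `n` copies of `B`, associating to the left. -/
def appN (A B : Lam) : ℕ → Lam
  | 0 => A
  | n + 1 => app (appN A B n) B

/-- `M N₁ ⋯ Nₘ`: `M` applied to the terms in `L`, associating to the left. -/
def appList (M : Lam) (L : List Lam) : Lam := L.foldl app M

/-- `A_Y = Y (λz. f z z)`, where `f` is a free variable. -/
def AY (Y : Lam) (f : ℕ) : Lam :=
  app Y (abs (app (app (var (f + 1)) (var 0)) (var 0)))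

/-- `Occ M d S`: `S` occurs as a subterm of `M` under `d` binders. -/
inductive Occ : Lam → ℕ → Lam → Prop
  | refl (M : Lam) : Occ M 0 M
  | appL {M : Lam} {d : ℕ} {s t : Lam} : Occ M d (Lam.app s t) → Occ M d s
  | appR {M : Lam} {d : ℕ} {s t : Lam} : Occ M d (Lam.app s t) → Occ M d t
  | abs {M : Lam} {d : ℕ} {t : Lam} : Occ M d (Lam.abs t) → Occ M (d + 1) t

/-- `M` is balanced (w.r.t. the free variable `f`): for every subterm `f s t` of `M`
    whose head is a free occurrence of the variable `f`, we have `s ≡ t`.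
    (Under `d` binders, the free variable `f` is the de Bruijn index `f + d`.) -/
def Balanced (f : ℕ) (M : Lam) : Prop :=
  ∀ (d : ℕ) (s t : Lam), Occ M d (app (app (var (f + d)) s) t) → s = t


/-!
Write `double c` for the map turning every application `c s` into `c s s`, so that
`A_Y = double f P` with `P = Y (λz. f z)`, and every term `double f Q` is balanced. Since
`f ∉ FV Y`, the variable `f` occurs in `P` only in function position. This property is preserved
by parallel reduction, and on such terms `double f` commutes with substitution and hence with
Takahashi's complete development `star`: `star^[n] A_Y = double f (star^[n] P)`. By the triangle
property `t ⇒ u → u ⇒ star t` of parallel reduction, every reduct of `A_Y` reduces further to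
some `star^[n] A_Y`.
-/

open Relation

theorem lift_lift (t : Lam) {i j : ℕ} (h : i ≤ j) :
    lift i (lift j t) = lift (j + 1) (lift i t) := by
  induction t generalizing i j with
  | var n => grind [lift]
  | app s t ihs iht => simp [lift, ihs h, iht h]
  | abs t ih => simp [lift, ih (Nat.succ_le_succ h)]

theorem lift_subst_of_le (t u : Lam) {d k : ℕ} (h : d ≤ k) :
    lift d (subst t k u) = subst (lift d t) (k + 1) (lift d u) := by
  induction t generalizing u d k with
  | var n => grind [lift, subst]
  | app s t ihs iht => simp [lift, subst, ihs u h, iht u h]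
  | abs t ih => simp [lift, subst, ih _ (Nat.succ_le_succ h), lift_lift u (Nat.zero_le d)]

theorem lift_subst_of_ge (t u : Lam) {d k : ℕ} (h : k ≤ d) :
    lift d (subst t k u) = subst (lift (d + 1) t) k (lift d u) := by
  induction t generalizing u d k with
  | var n => grind [lift, subst]
  | app s t ihs iht => simp [lift, subst, ihs u h, iht u h]
  | abs t ih => simp [lift, subst, ih _ (Nat.succ_le_succ h), lift_lift u (Nat.zero_le d)]

theorem subst_lift (t u : Lam) (k : ℕ) : subst (lift k t) k u = t := by
  induction t generalizing u k with
  | var n => grind [lift, subst]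
  | app s t ihs iht => simp [lift, subst, ihs, iht]
  | abs t ih => simp [lift, subst, ih]

theorem subst_subst (t u v : Lam) {j k : ℕ} (h : j ≤ k) :
    subst (subst t j u) k v = subst (subst t (k + 1) (lift j v)) j (subst u k v) := by
  induction t generalizing u v j k with
  | var n => grind [lift, subst, subst_lift]
  | app s t ihs iht => simp [subst, ihs u v h, iht u v h]
  | abs t ih =>
    simp [subst, ih _ _ (Nat.succ_le_succ h), lift_lift v (Nat.zero_le j),
      lift_subst_of_le u v (Nat.zero_le k)]

theorem betaStar_app {s s' t t' : Lam} (hs : BetaStar s s') (ht : BetaStar t t') :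
    BetaStar (app s t) (app s' t') :=
  (hs.lift (app · t) fun _ _ => Beta.appL t).trans (ht.lift (app s') fun _ _ => Beta.appR s')

theorem betaStar_abs {t t' : Lam} (h : BetaStar t t') : BetaStar (abs t) (abs t') :=
  h.lift abs fun _ _ => Beta.abs

inductive Par : Lam → Lam → Prop
  | var (n : ℕ) : Par (var n) (var n)
  | app {s s' t t' : Lam} : Par s s' → Par t t' → Par (app s t) (app s' t')
  | abs {t t' : Lam} : Par t t' → Par (abs t) (abs t')
  | beta {t t' u u' : Lam} : Par t t' → Par u u' → Par (app (abs t) u) (subst t' 0 u')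

namespace Par

theorem refl : ∀ t : Lam, Par t t
  | .var n => .var n
  | .app s t => .app (refl s) (refl t)
  | .abs t => .abs (refl t)

theorem of_beta {s t : Lam} (h : Beta s t) : Par s t := by
  induction h with
  | beta t u => exact .beta (refl t) (refl u)
  | appL t _ ih => exact .app ih (refl t)
  | appR s _ ih => exact .app (refl s) ih
  | abs _ ih => exact .abs ih

theorem betaStar {s t : Lam} (h : Par s t) : BetaStar s t := by
  induction h with
  | var n => exact .refl
  | app _ _ ihs iht => exact betaStar_app ihs iht
  | abs _ ih => exact betaStar_abs ih
  | beta _ _ iht ihu => exact (betaStar_app (betaStar_abs iht) ihu).tail (.beta _ _)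

theorem lift {t t' : Lam} (h : Par t t') (d : ℕ) : Par (t.lift d) (t'.lift d) := by
  induction h generalizing d with
  | var n => exact refl _
  | app _ _ ihs iht => exact .app (ihs d) (iht d)
  | abs _ ih => exact .abs (ih (d + 1))
  | @beta t t' u u' _ _ iht ihu =>
    rw [Lam.lift, lift_subst_of_ge t' u' (Nat.zero_le d)]
    exact .beta (iht (d + 1)) (ihu d)

theorem subst {t t' u u' : Lam} (ht : Par t t') (hu : Par u u') (k : ℕ) :
    Par (t.subst k u) (t'.subst k u') := by
  induction ht generalizing u u' k with
  | var n => simp only [Lam.subst]; split_ifs <;> first | exact hu | exact refl _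
  | app _ _ ihs iht => exact .app (ihs hu k) (iht hu k)
  | abs _ ih => exact .abs (ih (hu.lift 0) (k + 1))
  | @beta a a' b b' _ _ iha ihb =>
    rw [Lam.subst, subst_subst a' b' u' (Nat.zero_le k)]
    exact .beta (iha (hu.lift 0) (k + 1)) (ihb hu k)

end Par

def star : Lam → Lam
  | var n => var n
  | abs t => abs (star t)
  | app (abs t) u => subst (star t) 0 (star u)
  | app s t => app (star s) (star t)

theorem star_app_of_ne_abs {s : Lam} (h : ∀ b, s ≠ abs b) (t : Lam) :
    star (app s t) = app (star s) (star t) := by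
  cases s with
  | abs b => exact absurd rfl (h b)
  | _ => rfl

theorem Par.triangle {t u : Lam} (h : Par t u) : Par u (star t) := by
  induction h with
  | var n => exact .var n
  | @app s s' t t' hs _ ihs iht =>
    cases hs with
    | abs => cases ihs with | abs ihb => exact .beta ihb iht
    | var => exact .app ihs iht
    | app => exact .app ihs iht
    | beta => exact .app ihs iht
  | abs _ ih => exact .abs ih
  | beta _ _ iht ihu => exact iht.subst ihu 0

section Triangle

variable {α : Type*} {r : α → α → Prop} {g : α → α}

theorem _root_.Relation.ReflTransGen.strip_of_triangle (triangle : ∀ a b, r a b → r b (g a))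
    {a a' b : α} (ha : r a a') (hb : ReflTransGen r a b) :
    ∃ c, ReflTransGen r a' c ∧ r b c := by
  induction hb with
  | refl => exact ⟨a', .refl, ha⟩
  | tail _ hbb' ih =>
    obtain ⟨c, ha'c, hbc⟩ := ih
    exact ⟨g _, ha'c.tail (triangle _ _ hbc), triangle _ _ hbb'⟩

theorem _root_.Relation.ReflTransGen.exists_iterate_of_triangle
    (triangle : ∀ a b, r a b → r b (g a)) {a b : α} (h : ReflTransGen r a b) :
    ∃ n, ReflTransGen r b (g^[n] a) := by
  induction h with
  | refl => exact ⟨0, .refl⟩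
  | tail _ hbb' ih =>
    obtain ⟨n, hn⟩ := ih
    obtain ⟨c, hb'c, hnc⟩ := hn.strip_of_triangle triangle hbb'
    exact ⟨n + 1, by rw [Function.iterate_succ_apply']; exact hb'c.tail (triangle _ _ hnc)⟩

end Triangle

theorem BetaStar.exists_iterate_star {t u : Lam} (h : BetaStar t u) :
    ∃ n, BetaStar u (star^[n] t) := by
  have hpar : ReflTransGen Par t u := ReflTransGen.mono (fun _ _ => Par.of_beta) _ _ h
  obtain ⟨n, hn⟩ := hpar.exists_iterate_of_triangle fun _ _ => Par.triangle
  exact ⟨n, hn.lift' id fun _ _ => Par.betaStar⟩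

/-- Every free occurrence of the variable `c` in `t` is the function part of an application;
`b = true` says that `t` itself stands in function position, so that `t = var c` is allowed. -/
def AppliedOnly : ℕ → Bool → Lam → Prop
  | c, b, var n => b = true ∨ n ≠ c
  | c, _, abs t => AppliedOnly (c + 1) false t
  | c, _, app s t => AppliedOnly c true s ∧ AppliedOnly c false t

def double : ℕ → Lam → Lam
  | _, var n => var n
  | c, abs t => abs (double (c + 1) t)
  | c, app s t =>
      if s = var c then app (app (var c) (double c t)) (double c t)
      else app (double c s) (double c t)

theorem double_app_of_ne {c : ℕ} {s : Lam} (h : s ≠ var c) (t : Lam) :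
    double c (app s t) = app (double c s) (double c t) :=
  if_neg h

namespace AppliedOnly

theorem of_false {c : ℕ} {t : Lam} (h : AppliedOnly c false t) (b : Bool) :
    AppliedOnly c b t := by
  cases t with
  | var n => exact .inr (h.resolve_left Bool.false_ne_true)
  | _ => exact h

theorem ne_var {c : ℕ} {t : Lam} (h : AppliedOnly c false t) : t ≠ var c := by
  rintro rfl
  simp [AppliedOnly] at h

theorem lift {c d : ℕ} {b : Bool} {t : Lam} (hd : d ≤ c) (h : AppliedOnly c b t) :
    AppliedOnly (c + 1) b (t.lift d) := by
  induction t generalizing c d b with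
  | var n => grind [Lam.lift, AppliedOnly]
  | app s t ihs iht => exact ⟨ihs hd h.1, iht hd h.2⟩
  | abs t ih => exact ih (Nat.succ_le_succ hd) h

theorem subst {c k : ℕ} {b : Bool} {t u : Lam} (hk : k ≤ c) (ht : AppliedOnly (c + 1) b t)
    (hu : AppliedOnly c false u) : AppliedOnly c b (t.subst k u) := by
  induction t generalizing c k b u with
  | var n =>
    simp only [Lam.subst]
    split_ifs
    · exact .inr (by omega)
    · exact hu.of_false b
    · grind [AppliedOnly]
  | app s t ihs iht => exact ⟨ihs hk ht.1 hu, iht hk ht.2 hu⟩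
  | abs t ih => exact ih (Nat.succ_le_succ hk) ht (hu.lift (Nat.zero_le c))

end AppliedOnly

theorem Par.appliedOnly {c : ℕ} {b : Bool} {t t' : Lam} (h : Par t t')
    (ht : AppliedOnly c b t) : AppliedOnly c b t' := by
  induction h generalizing c b with
  | var n => exact ht
  | app _ _ ihs iht => exact ⟨ihs ht.1, iht ht.2⟩
  | abs _ ih => exact ih ht
  | beta _ _ iht ihu => exact ((iht ht.1).subst (Nat.zero_le c) (ihu ht.2)).of_false b

theorem AppliedOnly.star {c : ℕ} {b : Bool} {t : Lam} (h : AppliedOnly c b t) :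
    AppliedOnly c b (star t) :=
  (Par.refl t).triangle.appliedOnly h

theorem subst_zero_eq_var {t u : Lam} {m : ℕ} (h : subst t 0 u = var m) :
    (t = var 0 ∧ u = var m) ∨ t = var (m + 1) := by
  cases t with
  | var n => simp only [subst] at h; grind
  | _ => simp [subst] at h

theorem Par.eq_var_of_appliedOnly {c : ℕ} {s : Lam} (h : Par s (.var c))
    (hs : AppliedOnly c true s) : s = .var c := by
  generalize hv : Lam.var c = v at h
  cases h with
  | var n => rfl
  | app | abs => cases hv
  | beta ht hu =>
    rcases subst_zero_eq_var hv.symm with ⟨-, rfl⟩ | rfl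
    · exact absurd rfl (hu.appliedOnly hs.2).ne_var
    · exact absurd rfl (ht.appliedOnly hs.1).ne_var

theorem double_eq_var {c n : ℕ} {t : Lam} (h : double c t = var n) : t = var n := by
  cases t with
  | var m => simpa [double] using h
  | app s t => simp only [double] at h; split_ifs at h
  | abs t => simp [double] at h

theorem double_ne_abs {c : ℕ} {s : Lam} (h : ∀ b, s ≠ abs b) (b : Lam) :
    double c s ≠ abs b := by
  cases s with
  | var n => simp [double]
  | app a t => simp only [double]; split_ifs <;> simp
  | abs t => exact absurd rfl (h t)

theorem lift_eq_var_succ_iff {s : Lam} {c d : ℕ} (hd : d ≤ c) :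
    s.lift d = var (c + 1) ↔ s = var c := by
  cases s with
  | var n => grind [lift]
  | _ => simp [lift]

theorem double_lift (t : Lam) {c d : ℕ} (hd : d ≤ c) :
    double (c + 1) (t.lift d) = (double c t).lift d := by
  induction t generalizing c d with
  | var n => simp only [lift, double]; split_ifs <;> rfl
  | app s t ihs iht => grind [lift, double, lift_eq_var_succ_iff]
  | abs t ih => simp only [lift, double, ih (Nat.succ_le_succ hd)]

theorem subst_ne_var {s u : Lam} {k c : ℕ} (hk : k ≤ c) (hs : s ≠ var (c + 1))
    (hu : AppliedOnly c false u) : s.subst k u ≠ var c := by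
  cases s with
  | var n =>
    simp only [subst]
    split_ifs
    · exact mt var.inj (by omega)
    · exact hu.ne_var
    · exact mt var.inj (by grind)
  | _ => simp [subst]

theorem double_subst (t u : Lam) {k c : ℕ} (hk : k ≤ c) (hu : AppliedOnly c false u) :
    double c (t.subst k u) = (double (c + 1) t).subst k (double c u) := by
  induction t generalizing u k c with
  | var n => simp only [subst, double]; split_ifs <;> rfl
  | app s t ihs iht => grind [subst, double, subst_ne_var]
  | abs t ih =>
    simp only [subst, double, ih _ (Nat.succ_le_succ hk) (hu.lift (Nat.zero_le c)),
      double_lift u (Nat.zero_le c)]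

theorem star_double {c : ℕ} {b : Bool} {t : Lam} (h : AppliedOnly c b t) :
    star (double c t) = double c (star t) := by
  induction t generalizing c b with
  | var n => rfl
  | abs t ih => simp only [double, star, ih h]
  | app s t ihs iht =>
    obtain ⟨hs, ht⟩ := h
    by_cases hsc : s = var c
    · subst hsc
      simp [double, star, iht ht]
    have hstar : star s ≠ var c := fun he =>
      hsc (Par.eq_var_of_appliedOnly (he ▸ (Par.refl s).triangle) hs)
    cases s with
    | var n => simp [double, hsc, star, iht ht]
    | abs a =>
      have ha : star (double (c + 1) a) = double (c + 1) (star a) := by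
        simpa [double, star] using ihs hs
      rw [double_app_of_ne hsc, double, star, ha, iht ht, star]
      exact (double_subst _ _ (Nat.zero_le c) ht.star).symm
    | app a₁ a₂ =>
      have hne : ∀ b, app a₁ a₂ ≠ abs b := fun _ => nofun
      rw [double_app_of_ne hsc, star_app_of_ne_abs (double_ne_abs hne), ihs hs, iht ht,
        star_app_of_ne_abs hne, double_app_of_ne hstar]

theorem iterate_star_double {c : ℕ} {b : Bool} {t : Lam} (h : AppliedOnly c b t) (n : ℕ) :
    star^[n] (double c t) = double c (star^[n] t) := by
  induction n generalizing t with
  | zero => rfl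
  | succ n ih => simp only [Function.iterate_succ_apply, star_double h, ih h.star]

theorem Occ.of_var {n d : ℕ} {S : Lam} (h : Occ (var n) d S) : S = var n := by
  induction h with
  | refl => rfl
  | appL _ ih | appR _ ih | abs _ ih => cases ih

theorem Occ.of_app {s t : Lam} {d : ℕ} {S : Lam} (h : Occ (app s t) d S) :
    (d = 0 ∧ S = app s t) ∨ Occ s d S ∨ Occ t d S := by
  induction h with
  | refl => exact .inl ⟨rfl, rfl⟩
  | appL _ ih =>
    rcases ih with ⟨rfl, he⟩ | h | h
    · cases he; exact .inr (.inl (.refl _))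
    · exact .inr (.inl h.appL)
    · exact .inr (.inr h.appL)
  | appR _ ih =>
    rcases ih with ⟨rfl, he⟩ | h | h
    · cases he; exact .inr (.inr (.refl _))
    · exact .inr (.inl h.appR)
    · exact .inr (.inr h.appR)
  | abs _ ih =>
    rcases ih with ⟨-, he⟩ | h | h
    · cases he
    · exact .inr (.inl h.abs)
    · exact .inr (.inr h.abs)

theorem Occ.of_abs {t : Lam} {d : ℕ} {S : Lam} (h : Occ (.abs t) d S) :
    (d = 0 ∧ S = .abs t) ∨ ∃ d', d = d' + 1 ∧ Occ t d' S := by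
  induction h with
  | refl => exact .inl ⟨rfl, rfl⟩
  | appL _ ih =>
    rcases ih with ⟨-, he⟩ | ⟨d', rfl, h⟩
    · cases he
    · exact .inr ⟨d', rfl, h.appL⟩
  | appR _ ih =>
    rcases ih with ⟨-, he⟩ | ⟨d', rfl, h⟩
    · cases he
    · exact .inr ⟨d', rfl, h.appR⟩
  | abs _ ih =>
    rcases ih with ⟨rfl, he⟩ | ⟨d', rfl, h⟩
    · cases he; exact .inr ⟨0, rfl, .refl _⟩
    · exact .inr ⟨d' + 1, rfl, h.abs⟩

theorem balanced_var (f n : ℕ) : Balanced f (var n) :=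
  fun _ _ _ h => nomatch h.of_var

theorem balanced_abs {f : ℕ} {t : Lam} (h : Balanced (f + 1) t) : Balanced f (abs t) := by
  intro d s s' hocc
  rcases hocc.of_abs with ⟨-, he⟩ | ⟨d', rfl, hocc⟩
  · cases he
  · exact h d' s s' (by rwa [Nat.add_right_comm, Nat.add_assoc])

theorem balanced_app {f : ℕ} {s t : Lam} (hs : Balanced f s) (ht : Balanced f t)
    (hroot : ∀ a b, app s t = app (app (var f) a) b → a = b) : Balanced f (app s t) := by
  intro d a b hocc
  rcases hocc.of_app with ⟨rfl, he⟩ | hocc | hocc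
  · exact hroot a b he.symm
  · exact hs d a b hocc
  · exact ht d a b hocc

theorem double_ne_app_var (c : ℕ) (s a : Lam) : double c s ≠ app (var c) a := by
  cases s with
  | var n => simp [double]
  | abs t => simp [double]
  | app s t =>
    by_cases hs : s = var c
    · simp [double, hs]
    · rw [double_app_of_ne hs]
      exact fun he => hs (double_eq_var (app.inj he).1)

theorem balanced_double (c : ℕ) (t : Lam) : Balanced c (double c t) := by
  induction t generalizing c with
  | var n => exact balanced_var c n
  | abs t ih => exact balanced_abs (ih (c + 1))
  | app s t ihs iht =>
    by_cases hs : s = var c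
    · simp only [double, if_pos hs]
      refine balanced_app (balanced_app (balanced_var c c) (iht c) ?_) (iht c) ?_
      · intro a b he; cases he
      · intro a b he; cases he; rfl
    · rw [double_app_of_ne hs]
      refine balanced_app (ihs c) (iht c) ?_
      intro a b he
      exact absurd (app.inj he).1 (double_ne_app_var c s a)

theorem succ_notMem_FV_of_notMem_FV_abs {c : ℕ} {t : Lam} (h : c ∉ FV (abs t)) :
    c + 1 ∉ FV t :=
  fun hc => h (Finset.mem_image.mpr ⟨c + 1, Finset.mem_erase.mpr ⟨c.succ_ne_zero, hc⟩, rfl⟩)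

theorem appliedOnly_of_notMem_FV {c : ℕ} {t : Lam} (h : c ∉ FV t) (b : Bool) :
    AppliedOnly c b t := by
  induction t generalizing c b with
  | var n => exact .inr fun he => h (by simp [FV, he])
  | app s t ihs iht =>
    simp only [FV, Finset.mem_union, not_or] at h
    exact ⟨ihs h.1 true, iht h.2 false⟩
  | abs t ih => exact ih (succ_notMem_FV_of_notMem_FV_abs h) false

theorem double_of_notMem_FV {c : ℕ} {t : Lam} (h : c ∉ FV t) : double c t = t := by
  induction t generalizing c with
  | var n => rfl
  | app s t ihs iht =>
    simp only [FV, Finset.mem_union, not_or] at h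
    rw [double_app_of_ne (by rintro rfl; simp [FV] at h), ihs h.1, iht h.2]
  | abs t ih => rw [double, ih (succ_notMem_FV_of_notMem_FV_abs h)]

theorem AY_eq_double {Y : Lam} {f : ℕ} (hf : f ∉ FV Y) :
    AY Y f = double f (app Y (abs (app (var (f + 1)) (var 0)))) := by
  rw [double_app_of_ne (by rintro rfl; simp [FV] at hf), double_of_notMem_FV hf]
  simp [AY, double]

theorem reducts_can_be_balanced_general (Y : Lam) (f : ℕ) (hf : f ∉ FV Y)
    (M : Lam) (hM : BetaStar (AY Y f) M) :
    ∃ N, BetaStar M N ∧ Balanced f N := by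
  have hP : AppliedOnly f false (app Y (abs (app (var (f + 1)) (var 0)))) :=
    ⟨appliedOnly_of_notMem_FV hf true, Or.inl rfl, Or.inr (by omega)⟩
  rw [AY_eq_double hf] at hM
  obtain ⟨n, hn⟩ := hM.exists_iterate_star
  rw [iterate_star_double hP] at hn
  exact ⟨_, hn, balanced_double f _⟩

/-- every reduct of `A_Y` can be balanced. -/
theorem reducts_can_be_balanced (Y : Lam) (f : ℕ) (hY : IsFPC Y) (hf : f ∉ FV Y)
    (M : Lam) (hM : BetaStar (AY Y f) M) :
    ∃ N, BetaStar M N ∧ Balanced f N :=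
  reducts_can_be_balanced_general Y f hf M hM

end Lam
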